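/- Let G be a finite group and l : G → ℝ a length function with l(e)=0, l(g)=l(g⁻¹). If the map P_t : ℂ[G] → ℂ[G], P_t(λ(g)) = exp(-t·l(g))·λ(g), is completely positive for all t ≥ 0, then l is conditionally negative definite. -/

import Mathlib

/-!
Put `F t = Σ_{i,j} α_i conj(α_j) exp (-t l(g_i⁻¹ g_j))`. Complete positivity of `P_t`, tested on
`a_i = λ(g_i)` and `b_i = conj(α_i) λ(g_i⁻¹)`, shows that `F t · λ(e)` is a sum of elements `x† x`,
so `F t ≥ 0` in the partial order of `ℂ` for `t ≥ 0`. Since `Σ α_i = 0` we have `F 0 = 0`, hence the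
right derivative `F' 0 = -Σ_{i,j} α_i conj(α_j) l(g_i⁻¹ g_j)` is `≥ 0`.
-/

open scoped BigOperators ComplexOrder

/-- The adjoint (involution) on the group algebra:
`(Σ α_g λ(g))† = Σ conj(α_g) λ(g⁻¹)`. -/
noncomputable def gstar {G : Type*} [Group G] (x : MonoidAlgebra ℂ G) : MonoidAlgebra ℂ G :=
  MonoidAlgebra.ofCoeff
    (Finsupp.equivMapDomain (Equiv.inv G) (Finsupp.mapRange (starRingEnd ℂ) (map_zero _) x.coeff))

/-- The semigroup `P_t` acting on the group algebra by
`P_t (λ(g)) = exp (-t l(g)) λ(g)`, extended linearly. -/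
noncomputable def Psemi {G : Type*} [Group G] (l : G → ℝ) (t : ℝ)
    (x : MonoidAlgebra ℂ G) : MonoidAlgebra ℂ G :=
  x.coeff.sum fun g a => MonoidAlgebra.single g ((Real.exp (-t * l g) : ℂ) * a)

open Set MonoidAlgebra

theorem HasDerivWithinAt.nonneg_of_nonneg {E : Type*} [NormedAddCommGroup E] [NormedSpace ℝ E]
    [PartialOrder E] [OrderClosedTopology E] [PosSMulMono ℝ E] {F : ℝ → E} {D : E} {a : ℝ}
    (hF : HasDerivWithinAt F D (Ioi a) a) (ha : F a = 0) (hpos : ∀ t, a < t → 0 ≤ F t) :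
    0 ≤ D := by
  refine ge_of_tendsto ((hasDerivWithinAt_iff_tendsto_slope' self_notMem_Ioi).mp hF) ?_
  filter_upwards [self_mem_nhdsWithin] with t ht
  rw [slope_def_module, ha, sub_zero]
  exact smul_nonneg (inv_nonneg.mpr (sub_nonneg.mpr ht.le)) (hpos t ht)

theorem hasDerivAt_mul_exp_neg_mul_zero (c : ℂ) (a : ℝ) :
    HasDerivAt (fun t : ℝ => c * (Real.exp (-t * a) : ℂ)) (-(c * a)) 0 := by
  simpa using (((hasDerivAt_id (0 : ℝ)).neg.mul_const a).exp.ofReal_comp).const_mul c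

section GroupAlgebra

variable {G : Type*} [Group G]

theorem coeff_gstar (x : MonoidAlgebra ℂ G) (g : G) :
    (gstar x).coeff g = starRingEnd ℂ (x.coeff g⁻¹) := by
  simp [gstar, Finsupp.equivMapDomain]

theorem gstar_single (g : G) (c : ℂ) : gstar (single g c) = single g⁻¹ (starRingEnd ℂ c) := by
  classical
  ext h
  simp only [coeff_gstar, coeff_single, Finsupp.single_apply, inv_eq_iff_eq_inv,
    apply_ite (starRingEnd ℂ), map_zero]

theorem Psemi_single (l : G → ℝ) (t : ℝ) (g : G) (c : ℂ) :
    Psemi l t (single g c) = single g ((Real.exp (-t * l g) : ℂ) * c) := by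
  simp [Psemi, Finsupp.sum_single_index]

theorem coeff_one_gstar_mul_self_nonneg (x : MonoidAlgebra ℂ G) : 0 ≤ (gstar x * x).coeff 1 := by
  rw [coeff_mul_apply_left]
  refine Finsupp.sum_nonneg fun g _ => ?_
  rw [coeff_gstar, mul_one]
  exact star_mul_self_nonneg _

theorem coeff_one_sum_gstar_mul_self_nonneg {ι : Type*} (s : Finset ι)
    (x : ι → MonoidAlgebra ℂ G) : 0 ≤ (∑ r ∈ s, gstar (x r) * x r).coeff 1 := by
  rw [coeff_sum, Finset.sum_apply']
  exact Finset.sum_nonneg fun r _ => coeff_one_gstar_mul_self_nonneg (x r)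

theorem gstar_single_mul_Psemi_mul_single (l : G → ℝ) (t : ℝ) (g h : G) (a b : ℂ) :
    gstar (single g⁻¹ (starRingEnd ℂ a)) * Psemi l t (gstar (single g 1) * single h 1) *
        single h⁻¹ (starRingEnd ℂ b) =
      single 1 (a * starRingEnd ℂ b * (Real.exp (-t * l (g⁻¹ * h)) : ℂ)) := by
  simp only [gstar_single, inv_inv, Complex.conj_conj, map_one, single_mul_single, Psemi_single,
    mul_one, mul_inv_cancel_left, mul_inv_cancel, mul_right_comm]

end GroupAlgebra

theorem stmt13_general {G : Type*} [Group G] (l : G → ℝ)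
    (hcp : ∀ t : ℝ, 0 ≤ t →
      ∀ (n : ℕ) (a b : Fin n → MonoidAlgebra ℂ G),
        ∃ (k : ℕ) (x : Fin k → MonoidAlgebra ℂ G),
          (∑ i, ∑ j, gstar (b i) * Psemi l t (gstar (a i) * a j) * b j) =
            ∑ r, gstar (x r) * x r) :
    ∀ (k : ℕ) (α : Fin k → ℂ) (g : Fin k → G), (∑ i, α i) = 0 →
      (∑ i, ∑ j, α i * (starRingEnd ℂ) (α j) * (l ((g i)⁻¹ * g j) : ℂ)) ≤ 0 := by
  intro k α g hα
  set F : ℝ → ℂ := fun t =>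
    ∑ i, ∑ j, α i * starRingEnd ℂ (α j) * (Real.exp (-t * l ((g i)⁻¹ * g j)) : ℂ)
  have hF_nonneg : ∀ t, 0 < t → 0 ≤ F t := by
    intro t ht
    obtain ⟨m, x, hx⟩ := hcp t ht.le k (fun i => single (g i) 1)
      (fun i => single (g i)⁻¹ (starRingEnd ℂ (α i)))
    have hFt : F t = (∑ r, gstar (x r) * x r).coeff 1 := by
      simp [← hx, F, gstar_single_mul_Psemi_mul_single, coeff_sum, Finset.sum_apply']
    exact hFt ▸ coeff_one_sum_gstar_mul_self_nonneg _ x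
  have hF_zero : F 0 = 0 := by
    simp [F, ← Finset.sum_mul_sum, hα]
  have hF_deriv : HasDerivAt F
      (-∑ i, ∑ j, α i * starRingEnd ℂ (α j) * (l ((g i)⁻¹ * g j) : ℂ)) 0 := by
    simpa only [Finset.sum_neg_distrib] using
      HasDerivAt.fun_sum (u := Finset.univ) fun i _ =>
        HasDerivAt.fun_sum (u := Finset.univ) fun j _ =>
          hasDerivAt_mul_exp_neg_mul_zero (α i * starRingEnd ℂ (α j)) (l ((g i)⁻¹ * g j))
  exact neg_nonneg.mp (hF_deriv.hasDerivWithinAt.nonneg_of_nonneg hF_zero hF_nonneg)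

theorem stmt13 {G : Type*} [Group G] [Fintype G]
    (l : G → ℝ) (hl0 : l 1 = 0) (hlinv : ∀ g : G, l g⁻¹ = l g)
    (hcp : ∀ t : ℝ, 0 ≤ t →
      ∀ (n : ℕ) (a b : Fin n → MonoidAlgebra ℂ G),
        ∃ (k : ℕ) (x : Fin k → MonoidAlgebra ℂ G),
          (∑ i, ∑ j, gstar (b i) * Psemi l t (gstar (a i) * a j) * b j) =
            ∑ r, gstar (x r) * x r) :
    ∀ (k : ℕ) (α : Fin k → ℂ) (g : Fin k → G), (∑ i, α i) = 0 →
      (∑ i, ∑ j, α i * (starRingEnd ℂ) (α j) * (l ((g i)⁻¹ * g j) : ℂ)) ≤ 0 :=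
  stmt13_general l hcp
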